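/- Let λ_1, ..., λ_m be a fixed ordering of a finite hyperparameter set Λ, fix α, δ, q ∈ (0,1), and let Z_1, ..., Z_n be i.i.d. random variables with common distribution p_Z. For each λ let R(Z, λ) ∈ [0,1] be the risk on data point Z and R_q(λ) = inf{ r ≥ 0 : Pr_{Z∼p_Z}[R(Z,λ) ≤ r] ≥ 1 − q } the q-quantile risk. With ε = δ, define r_n = (1.4·log log(2.1 n) + log(10/ε)) / n and q* = q − 1.5·√(q(1−q)·r_n) − 0.8·r_n, assume 1 ≤ ⌊n(1−q*)⌋ ≤ n, and let R̂_{q*}(λ, δ) be the ⌊n(1−q*)⌋-th smallest element of { R(Z_1,λ), ..., R(Z_n,λ) }. Let Λ̂ = { λ_1, ..., λ_I }, where I is the largest index i ∈ {0, 1, ..., m} such that R̂_{q*}(λ_j, δ) < α for all j ≤ i (with Λ̂ = ∅ when I = 0). Then P[ R_q(λ̂) ≤ α for all λ̂ ∈ Λ̂ ] ≥ 1 − δ. -/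

import Mathlib

open MeasureTheory ProbabilityTheory Real Set
open scoped Nat
set_option maxHeartbeats 1000000

/-- The `k`-th smallest element (k-th order statistic, 1-indexed) of a list of reals. -/
noncomputable def kthSmallest (l : List ℝ) (k : ℕ) : ℝ :=
  (List.insertionSort (· ≤ ·) l).getD (k - 1) 0

/-- The `q`-quantile risk of hyperparameter `lam` for risk function `R` and data
distribution `μ`: `R_q(λ) = inf { r ≥ 0 : Pr_{Z∼μ}[R(Z,λ) ≤ r] ≥ 1 - q }`. -/
noncomputable def quantileRisk {E Λ : Type*} [MeasurableSpace E]
    (μ : Measure E) (R : E → Λ → ℝ) (lam : Λ) (q : ℝ) : ℝ :=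
  sInf {r : ℝ | 0 ≤ r ∧ (μ {z | R z lam ≤ r}).toReal ≥ 1 - q}

lemma exp_tail (x : ℝ) : Real.exp x - 1 - x = ∑' n : ℕ, x ^ (n + 2) / (n + 2)! := by
  have hs : Summable fun n : ℕ => x ^ n / n ! := Real.summable_pow_div_factorial x
  have h := Summable.sum_add_tsum_nat_add 2 hs
  have hexp : Real.exp x = ∑' n : ℕ, x ^ n / n ! := by
    rw [Real.exp_eq_exp_ℝ, NormedSpace.exp_eq_tsum_div]
  rw [← h] at hexp
  simp [Finset.sum_range_succ] at hexp
  linarith [hexp]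

lemma summable_tail (x : ℝ) : Summable fun n : ℕ => x ^ (n + 2) / ((n + 2)! : ℝ) := by
  have hs : Summable fun n : ℕ => x ^ n / (n ! : ℝ) := Real.summable_pow_div_factorial x
  exact hs.comp_injective (add_left_injective 2)

lemma L1 (s t : ℝ) (hs0 : 0 ≤ s) (hs1 : s ≤ 1) (ht : 0 ≤ t) :
    Real.exp (t * s) - 1 - t * s ≤ s ^ 2 * (Real.exp t - 1 - t) := by
  rw [exp_tail, exp_tail, ← tsum_mul_left]
  refine Summable.tsum_le_tsum (fun n => ?_) (summable_tail _) ((summable_tail t).mul_left _)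
  have h2 : s ^ (n + 2) ≤ s ^ 2 := pow_le_pow_of_le_one hs0 hs1 (by omega)
  have h3 : (0:ℝ) < ((n + 2)! : ℝ) := by positivity
  have h4 : (0:ℝ) ≤ t ^ (n+2) := by positivity
  have : (t * s) ^ (n + 2) = t ^ (n + 2) * s ^ (n + 2) := by ring
  rw [this]
  rw [div_le_iff₀ h3]
  have := mul_le_mul_of_nonneg_left h2 h4
  calc t ^ (n + 2) * s ^ (n + 2) ≤ t ^ (n+2) * s ^ 2 := this
    _ = s ^ 2 * (t ^ (n + 2) / ((n + 2)! : ℝ)) * ((n+2)! : ℝ) := by field_simp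

lemma exp_neg_le (x : ℝ) (hx : 0 ≤ x) : Real.exp (-x) ≤ 1 - x + x^2/2 := by
  have key : MonotoneOn (fun y : ℝ => 1 - y + y^2/2 - Real.exp (-y)) (Set.Ici 0) := by
    apply monotoneOn_of_deriv_nonneg (convex_Ici 0)
    · fun_prop
    · fun_prop
    · intro y hy
      have hD : HasDerivAt (fun y : ℝ => 1 - y + y^2/2 - Real.exp (-y))
          (-1 + y + Real.exp (-y)) y := by
        have h1 : HasDerivAt (fun y : ℝ => Real.exp (-y)) (-Real.exp (-y)) y := by
          have := (Real.hasDerivAt_exp (-y)).comp y (hasDerivAt_neg y); simp at this; exact this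
        have h2 : HasDerivAt (fun y : ℝ => 1 - y + y^2/2) (-1 + y) y := by
          have := ((hasDerivAt_pow 2 y).div_const 2)
          have h3 : HasDerivAt (fun y : ℝ => 1 - y) (-1) y := by
            simpa using (hasDerivAt_id y).const_sub 1
          have := h3.add ((hasDerivAt_pow 2 y).div_const 2); simp at this; exact this
        have := h2.sub h1; simp at this; exact this
      rw [hD.deriv]
      have := Real.add_one_le_exp (-y)
      simp only [interior_Ici, Set.mem_Ioi] at hy
      linarith
  have h0 : (0:ℝ) ∈ Set.Ici (0:ℝ) := Set.self_mem_Ici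
  have := key h0 hx hx
  simp at this
  linarith

lemma fact_ge : ∀ n : ℕ, 2 * 3 ^ n ≤ (n + 2)! := by
  intro n
  induction n with
  | zero => simp [Nat.factorial]
  | succ m ih =>
      have : (m + 3)! = (m + 3) * (m + 2)! := rfl
      calc 2 * 3 ^ (m+1) = 3 * (2 * 3 ^ m) := by ring
        _ ≤ 3 * (m+2)! := by omega
        _ ≤ (m + 3) * (m+2)! := by
            have : (0:ℕ) < (m+2)! := Nat.factorial_pos _
            exact Nat.mul_le_mul_right _ (by omega)
        _ = (m + 3)! := rfl

-- L3 : for 0 ≤ t < 3 : exp t - 1 - t ≤ t^2 / (2 * (1 - t/3))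

lemma L3 (t : ℝ) (ht : 0 ≤ t) (ht3 : t < 3) :
    Real.exp t - 1 - t ≤ t ^ 2 / (2 * (1 - t / 3)) := by
  rw [exp_tail]
  have hr0 : 0 ≤ t / 3 := by linarith
  have hr1 : t / 3 < 1 := by linarith
  have hgeo : ∑' n : ℕ, (t^2/2) * (t/3) ^ n = (t^2/2) * (1 - t/3)⁻¹ := by
    rw [tsum_mul_left, tsum_geometric_of_lt_one hr0 hr1]
  have hle : ∑' n : ℕ, t ^ (n + 2) / ((n + 2)! : ℝ) ≤ ∑' n : ℕ, (t^2/2) * (t/3) ^ n := by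
    refine Summable.tsum_le_tsum (fun n => ?_) (summable_tail t)
      ((summable_geometric_of_lt_one hr0 hr1).mul_left _)
    have h1 : (0:ℝ) < ((n+2)! : ℝ) := by positivity
    have h2 : (2 * 3 ^ n : ℝ) ≤ ((n+2)! : ℝ) := by exact_mod_cast fact_ge n
    have h3 : t ^ (n+2) = t^2 * t^n := by ring
    rw [div_le_iff₀ h1, h3]
    have h4 : (t/3)^n = t^n / 3^n := div_pow t 3 n
    have h5 : (0:ℝ) < 3^n := by positivity
    calc t^2 * t^n = (t^2/2) * (t^n/3^n) * (2 * 3^n) := by field_simp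
      _ ≤ (t^2/2) * (t^n/3^n) * ((n+2)! : ℝ) := by
          refine mul_le_mul_of_nonneg_left h2 (by positivity)
      _ = (t^2/2) * (t/3)^n * ((n+2)! : ℝ) := by rw [h4]
  calc _ ≤ _ := hle
    _ = (t^2/2) * (1 - t/3)⁻¹ := hgeo
    _ = t ^ 2 / (2 * (1 - t/3)) := by
        field_simp

lemma half_sq_le (t : ℝ) (ht : 0 ≤ t) : t^2/2 ≤ Real.exp t - 1 - t := by
  rw [exp_tail]
  have h0 : t^2/2 = t ^ (0+2) / ((0+2)! : ℝ) := by norm_num [Nat.factorial]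
  rw [h0]
  exact Summable.le_tsum (summable_tail t) 0 (fun i _ => by positivity)

lemma L4 (p t : ℝ) (hp0 : 0 ≤ p) (hp1 : p ≤ 1) (ht : 0 ≤ t) :
    1 + p * (Real.exp t - 1) ≤ Real.exp (p * t + p * (1 - p) * (Real.exp t - 1 - t)) := by
  have hC : 0 ≤ Real.exp t - 1 - t := by have := Real.add_one_le_exp t; linarith
  have ha := L1 (1 - p) t (by linarith) (by linarith) ht
  have hb := exp_neg_le (t * p) (by positivity)
  have hsq : (t * p)^2/2 ≤ p^2 * (Real.exp t - 1 - t) := by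
    have := half_sq_le t ht
    nlinarith
  have hkey : Real.exp (-(t*p)) * (1 + p * (Real.exp t - 1))
      ≤ 1 + p * (1-p) * (Real.exp t - 1 - t) := by
    have hexp : Real.exp (-(t*p)) * (1 + p * (Real.exp t - 1))
        = p * Real.exp (t * (1 - p)) + (1 - p) * Real.exp (-(t*p)) := by
      have h1 : Real.exp (t * (1-p)) = Real.exp t * Real.exp (-(t*p)) := by
        rw [← Real.exp_add]; ring_nf
      rw [h1]; ring
    rw [hexp]
    have ha' : Real.exp (t * (1-p)) ≤ 1 + t * (1-p) + (1-p)^2 * (Real.exp t - 1 - t) := by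
      linarith
    have hb' : Real.exp (-(t*p)) ≤ 1 - t*p + p^2 * (Real.exp t - 1 - t) := by nlinarith
    nlinarith [Real.exp_pos (-(t*p))]
  have h2 : 1 + p * (1-p) * (Real.exp t - 1 - t)
      ≤ Real.exp (p * (1-p) * (Real.exp t - 1 - t)) := by
    have := Real.add_one_le_exp (p * (1-p) * (Real.exp t - 1 - t)); linarith
  have h3 := hkey.trans h2
  rw [Real.exp_add]
  have h5 : Real.exp (p * t) * Real.exp (-(t*p)) = 1 := by
    rw [← Real.exp_add]; ring_nf; exact Real.exp_zero
  calc 1 + p * (Real.exp t - 1)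
      = Real.exp (p*t) * (Real.exp (-(t*p)) * (1 + p * (Real.exp t - 1))) := by
        rw [← mul_assoc, h5, one_mul]
    _ ≤ Real.exp (p*t) * Real.exp (p * (1-p) * (Real.exp t - 1 - t)) :=
        mul_le_mul_of_nonneg_left h3 (Real.exp_pos _).le

lemma exponent_bound (V d b0 : ℝ) (hV : 0 < V) (hd : 0 < d) (hb0 : 0 ≤ b0)
    (hkey : (2*V + (2/3)*d) * b0 ≤ d^2) :
    ∃ t : ℝ, 0 ≤ t ∧ V * (Real.exp t - 1 - t) - t * d ≤ -b0 := by
  set t := d / (V + d/3) with htdef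
  have hden : 0 < V + d/3 := by linarith
  have ht0 : 0 < t := div_pos hd hden
  have ht3 : t < 3 := by
    rw [htdef, div_lt_iff₀ hden]; linarith
  refine ⟨t, ht0.le, ?_⟩
  have h1 : 1 - t/3 = V / (V + d/3) := by
    rw [htdef]; field_simp; ring
  have h2 : 0 < 1 - t/3 := by rw [h1]; positivity
  have hL3 := L3 t ht0.le ht3
  have hVpos : (0:ℝ) ≤ V := hV.le
  have step : V * (Real.exp t - 1 - t) ≤ V * (t^2 / (2 * (1 - t/3))) :=
    mul_le_mul_of_nonneg_left hL3 hVpos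
  have hval : V * (t^2 / (2 * (1 - t/3))) - t * d = - (d^2 / (2*V + (2/3)*d)) := by
    rw [h1, htdef]
    field_simp
    ring
  have hfin : - (d^2 / (2*V + (2/3)*d)) ≤ -b0 := by
    have hden2 : 0 < 2*V + (2/3)*d := by linarith
    have : b0 ≤ d^2 / (2*V + (2/3)*d) := (le_div_iff₀ hden2).mpr (by linarith)
    linarith
  linarith

lemma key_arith (V b b0 d : ℝ) (hV : 0 ≤ V) (hb0 : 0 < b0) (hb : b0 + 1.45 ≤ b)
    (hd : 1.5 * Real.sqrt (V * b) + 0.8 * b - 1 ≤ d) :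
    0 < d ∧ (2*V + (2/3)*d) * b0 ≤ d^2 := by
  have hVb : 0 ≤ V * b := mul_nonneg hV (by linarith)
  set s := Real.sqrt (V * b) with hs
  have hs0 : 0 ≤ s := Real.sqrt_nonneg _
  have hs2 : s^2 = V * b := Real.sq_sqrt hVb
  have he : (0.8:ℝ) * b0 + 0.16 ≤ 0.8 * b - 1 := by nlinarith
  have hdpos : 0 < d := by nlinarith
  refine ⟨hdpos, ?_⟩
  have hstar : (2*V + (2/3)*(1.5*s + (0.8*b-1))) * b0 ≤ (1.5*s + (0.8*b-1))^2 := by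
    nlinarith [mul_nonneg hs0 hb0.le, mul_nonneg hV hb0.le, sq_nonneg s,
      mul_nonneg (mul_nonneg hs0 hb0.le) hb0.le]
  nlinarith [hstar, hdpos, hb0]

lemma single_bound {Ω E : Type*} [MeasurableSpace Ω] [MeasurableSpace E]
    (P : Measure Ω) [IsProbabilityMeasure P]
    (n : ℕ) (Z : Fin n → Ω → E) (hmeas : ∀ i, Measurable (Z i))
    (hindep : iIndepFun Z P)
    (μ : Measure E) [IsProbabilityMeasure μ]
    (hident : ∀ i, Measure.map (Z i) P = μ)
    (g : E → ℝ) (hg : Measurable g) (α : ℝ)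
    (pb : ℝ) (hpb0 : 0 ≤ pb) (hpb1 : pb ≤ 1)
    (hple : (μ {z | g z < α}).toReal ≤ pb)
    (k : ℕ) (t : ℝ) (ht : 0 ≤ t) :
    (P {ω | (k:ℝ) ≤ ∑ i : Fin n, (if g (Z i ω) < α then (1:ℝ) else 0)}).toReal
      ≤ Real.exp (-t * k + n * (pb * t + pb * (1 - pb) * (Real.exp t - 1 - t))) := by
  set D : Set E := {z | g z < α} with hD
  have hDmeas : MeasurableSet D := measurableSet_lt hg measurable_const
  set X : Fin n → Ω → ℝ := fun i ω => if g (Z i ω) < α then (1:ℝ) else 0 with hX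
  have hXeq : ∀ i, X i = (fun z => if g z < α then (1:ℝ) else 0) ∘ Z i := fun i => rfl
  have hfm : Measurable (fun z => if g z < α then (1:ℝ) else 0) :=
    Measurable.ite hDmeas measurable_const measurable_const
  have hXmeas : ∀ i, Measurable (X i) := fun i => hfm.comp (hmeas i)
  have hXindep : iIndepFun X P := by
    have := hindep.comp (fun _ => fun z => if g z < α then (1:ℝ) else 0) (fun _ => hfm)
    exact this
  set T : Ω → ℝ := ∑ i : Fin n, X i with hT
  have hTapp : ∀ ω, T ω = ∑ i : Fin n, X i ω := fun ω => by
    rw [hT]; simp [Finset.sum_apply]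
  have hTmeas : Measurable T := by
    have : Measurable fun ω => ∑ i : Fin n, X i ω :=
      Finset.measurable_sum _ (fun i _ => hXmeas i)
    have heq : (fun ω => ∑ i : Fin n, X i ω) = T := funext fun ω => (hTapp ω).symm
    rw [← heq]; exact this
  have hXrange : ∀ i ω, 0 ≤ X i ω ∧ X i ω ≤ 1 := by
    intro i ω; rw [hX]; dsimp only; split <;> norm_num
  have hTle : ∀ ω, T ω ≤ n := by
    intro ω; rw [hTapp]
    calc ∑ i : Fin n, X i ω ≤ ∑ _i : Fin n, (1:ℝ) :=
          Finset.sum_le_sum (fun i _ => (hXrange i ω).2)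
      _ = n := by simp
  have hint : Integrable (fun ω => Real.exp (t * T ω)) P := by
    refine Integrable.mono' (integrable_const (Real.exp (t * n)))
      ((hTmeas.const_mul t).exp.aestronglyMeasurable) (Filter.Eventually.of_forall fun ω => ?_)
    rw [Real.norm_eq_abs, abs_of_pos (Real.exp_pos _)]
    exact Real.exp_le_exp.mpr (mul_le_mul_of_nonneg_left (hTle ω) ht)
  -- identical marginals
  have hp : ∀ i, (P ((Z i) ⁻¹' D)).toReal = (μ D).toReal := by
    intro i
    rw [← hident i, Measure.map_apply (hmeas i) hDmeas]
  -- mgf of each X i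
  have hmgf : ∀ i, mgf (X i) P t = 1 + (μ D).toReal * (Real.exp t - 1) := by
    intro i
    have heq : (fun ω => Real.exp (t * X i ω))
        = fun ω => Set.indicator ((Z i) ⁻¹' D) (fun _ => Real.exp t - 1) ω + 1 := by
      funext ω
      by_cases h : g (Z i ω) < α
      · have hmem : ω ∈ (Z i) ⁻¹' D := h
        simp only [hX, if_pos h, Set.indicator_of_mem hmem, mul_one]
        ring
      · have hmem : ω ∉ (Z i) ⁻¹' D := h
        simp [hX, if_neg h, Set.indicator_of_notMem hmem]
    have hAmeas : MeasurableSet ((Z i) ⁻¹' D) := (hmeas i) hDmeas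
    rw [mgf, heq]
    rw [integral_add ((integrable_const (Real.exp t - 1)).indicator hAmeas) (integrable_const 1)]
    rw [integral_indicator_const _ hAmeas, integral_const]
    simp [Measure.real, hp i]
    ring
  -- Chernoff
  have hset : {ω | (k:ℝ) ≤ ∑ i : Fin n, (if g (Z i ω) < α then (1:ℝ) else 0)}
      = {ω | (k:ℝ) ≤ T ω} := by
    ext ω; simp [hTapp, hX]
  rw [hset]
  calc (P {ω | (k:ℝ) ≤ T ω}).toReal
      ≤ Real.exp (-t * k) * mgf T P t := measure_ge_le_exp_mul_mgf (k:ℝ) ht hint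
    _ ≤ Real.exp (-t * k) * Real.exp (n * (pb * t + pb * (1 - pb) * (Real.exp t - 1 - t))) := by
        refine mul_le_mul_of_nonneg_left ?_ (Real.exp_pos _).le
        rw [hT, iIndepFun.mgf_sum hXindep hXmeas Finset.univ]
        have hC : 0 ≤ Real.exp t - 1 := by
          have := Real.add_one_le_exp t; linarith
        have hmono : ∀ i ∈ Finset.univ, mgf (X i) P t
            ≤ Real.exp (pb * t + pb * (1 - pb) * (Real.exp t - 1 - t)) := by
          intro i _
          rw [hmgf i]
          have h1 : 1 + (μ D).toReal * (Real.exp t - 1) ≤ 1 + pb * (Real.exp t - 1) := by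
            nlinarith
          exact h1.trans (L4 pb t hpb0 hpb1 ht)
        calc ∏ i : Fin n, mgf (X i) P t
            ≤ ∏ _i : Fin n, Real.exp (pb * t + pb * (1 - pb) * (Real.exp t - 1 - t)) := by
              refine Finset.prod_le_prod (fun i _ => ?_) hmono
              rw [hmgf i]
              have h0 : 0 ≤ (μ D).toReal := ENNReal.toReal_nonneg
              nlinarith
          _ = Real.exp (n * (pb * t + pb * (1 - pb) * (Real.exp t - 1 - t))) := by
              rw [Finset.prod_const, ← Real.exp_nat_mul]
              simp
    _ = Real.exp (-t * k + n * (pb * t + pb * (1 - pb) * (Real.exp t - 1 - t))) := by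
        rw [← Real.exp_add]

open Classical in
lemma kthSmallest_lt_iff (l : List ℝ) (k : ℕ) (a : ℝ) (hk1 : 1 ≤ k) (hkn : k ≤ l.length) :
    kthSmallest l k < a ↔ k ≤ l.countP (fun x => decide (x < a)) := by
  set s := List.insertionSort (· ≤ ·) l with hsdef
  have hperm : s.Perm l := List.perm_insertionSort _ l
  have hsort : s.Pairwise (· ≤ ·) := List.pairwise_insertionSort _ l
  have hlen : s.length = l.length := hperm.length_eq
  have hcount : s.countP (fun x => decide (x < a)) = l.countP (fun x => decide (x < a)) :=
    hperm.countP_eq _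
  have hidx : k - 1 < s.length := by omega
  have hval : kthSmallest l k = s[k-1] := by
    rw [kthSmallest, ← hsdef, List.getD_eq_getElem _ _ hidx]
  rw [hval, ← hcount]
  constructor
  · intro h
    have htake : ∀ x ∈ s.take k, x < a := by
      intro x hx
      rw [List.mem_take_iff_getElem] at hx
      obtain ⟨i, hi, rfl⟩ := hx
      have hik : i ≤ k - 1 := by omega
      have hile : i < s.length := by omega
      have : s[i] ≤ s[k-1] := by
        rcases eq_or_lt_of_le hik with h' | h'
        · simp [h']
        · exact List.pairwise_iff_getElem.mp hsort i (k-1) hile hidx h'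
      linarith [h]
    calc k = (s.take k).length := by rw [List.length_take]; omega
      _ = (s.take k).countP (fun x => decide (x < a)) := by
          rw [eq_comm, List.countP_eq_length]
          intro x hx; simpa using htake x hx
      _ ≤ s.countP (fun x => decide (x < a)) := by
          conv_rhs => rw [← List.take_append_drop k s]
          rw [List.countP_append]; omega
  · intro h
    by_contra hcon
    push_neg at hcon
    have hdrop : (s.drop (k-1)).countP (fun x => decide (x < a)) = 0 := by
      rw [List.countP_eq_zero]
      intro x hx
      rw [List.mem_drop_iff_getElem] at hx
      obtain ⟨i, hi, rfl⟩ := hx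
      have : s[k-1] ≤ s[k-1+i] := by
        rcases Nat.eq_zero_or_pos i with h' | h'
        · simp [h']
        · exact List.pairwise_iff_getElem.mp hsort (k-1) (k-1+i) hidx (by omega) (by omega)
      simp only [decide_eq_true_eq]
      push_neg
      linarith
    have : s.countP (fun x => decide (x < a)) ≤ k - 1 := by
      conv_lhs => rw [← List.take_append_drop (k-1) s]
      rw [List.countP_append, hdrop]
      have := List.countP_le_length (l := s.take (k-1)) (p := fun x => decide (x < a))
      rw [List.length_take] at this
      omega
    omega

lemma countP_ofFn : ∀ {n : ℕ} (f : Fin n → ℝ) (p : ℝ → Bool),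
    (List.ofFn f).countP p = ∑ i : Fin n, (if p (f i) then 1 else 0) := by
  intro n
  induction n with
  | zero => intro f p; simp
  | succ m ih =>
      intro f p
      rw [List.ofFn_succ, List.countP_cons, Fin.sum_univ_succ, ih]
      by_cases h : p (f 0) <;> simp [h, Nat.add_comm]


/-- **Concrete QLTT guarantee with quantile-based tests and fixed sequence testing.**
Hyperparameters are indexed by `Fin m` in a prespecified order `λ_1, ..., λ_m`.
With `ε = δ`, empirical `q*`-quantiles `R̂_{q*}(λ, δ)` computed from i.i.d. calibration
data, and FST selection `Λ̂(ω) = {λ_i : ∀ j ≤ i, R̂_{q*}(λ_j, δ) < α}`, all selected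
hyperparameters satisfy `R_q(λ̂) ≤ α` with probability at least `1 - δ`. -/
theorem qltt_quantile_fst
    {Ω E : Type*} [MeasurableSpace Ω] [MeasurableSpace E]
    (P : Measure Ω) [IsProbabilityMeasure P]
    (m : ℕ)
    (α δ q : ℝ) (hα : α ∈ Set.Ioo (0 : ℝ) 1) (hδ : δ ∈ Set.Ioo (0 : ℝ) 1)
    (hq : q ∈ Set.Ioo (0 : ℝ) 1)
    (n : ℕ) (hn : 0 < n) (Z : Fin n → Ω → E)
    (hmeas : ∀ i, Measurable (Z i))
    (hindep : iIndepFun Z P)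
    (μ : Measure E) [IsProbabilityMeasure μ]
    (hident : ∀ i, Measure.map (Z i) P = μ)
    (R : E → Fin m → ℝ) (hRmeas : ∀ lam, Measurable fun z => R z lam)
    (hR : ∀ z lam, R z lam ∈ Set.Icc (0 : ℝ) 1)
    (ε rn qstar : ℝ) (k : ℕ)
    (hε : ε = δ)
    (hrn : rn = (1.4 * Real.log (Real.log (2.1 * n)) + Real.log (10 / ε)) / n)
    (hqstar : qstar = q - 1.5 * Real.sqrt (q * (1 - q) * rn) - 0.8 * rn)
    (hk : k = ⌊(n : ℝ) * (1 - qstar)⌋₊)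
    (hk1 : 1 ≤ k) (hkn : k ≤ n)
    (Rhatq : Fin m → Ω → ℝ)
    (hRhatq : Rhatq = fun lam ω => kthSmallest (List.ofFn fun i => R (Z i ω) lam) k)
    (Λhat : Ω → Set (Fin m))
    (hΛhat : Λhat = fun ω => {i | ∀ j ≤ i, Rhatq j ω < α}) :
    P {ω | ∀ lam ∈ Λhat ω, quantileRisk μ R lam q ≤ α} ≥ ENNReal.ofReal (1 - δ) := by
  by_cases hex : ∃ i : Fin m, α < quantileRisk μ R i q
  case neg =>
    push_neg at hex
    have : {ω | ∀ lam ∈ Λhat ω, quantileRisk μ R lam q ≤ α} = Set.univ :=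
      Set.eq_univ_iff_forall.mpr (fun ω lam _ => hex lam)
    rw [this, measure_univ]
    exact ENNReal.ofReal_le_one.mpr (by linarith [hδ.1])
  case pos =>
    classical
    -- minimal bad index
    set Tbad : Finset (Fin m) := Finset.univ.filter (fun i => α < quantileRisk μ R i q)
      with hTbad
    have hTne : Tbad.Nonempty := by
      obtain ⟨i, hi⟩ := hex
      exact ⟨i, by simp [hTbad, hi]⟩
    set i0 : Fin m := Tbad.min' hTne with hi0def
    have hi0 : α < quantileRisk μ R i0 q := by
      have := Tbad.min'_mem hTne
      simpa [hTbad] using this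
    have hmin : ∀ j : Fin m, α < quantileRisk μ R j q → i0 ≤ j := by
      intro j hj
      exact Tbad.min'_le j (by simp [hTbad, hj])
    -- quantile fact
    have hqf : (μ {z | R z i0 ≤ α}).toReal < 1 - q := by
      by_contra hcon
      push_neg at hcon
      have hmem : α ∈ {r : ℝ | 0 ≤ r ∧ (μ {z | R z i0 ≤ r}).toReal ≥ 1 - q} :=
        ⟨hα.1.le, hcon⟩
      have hbdd : BddBelow {r : ℝ | 0 ≤ r ∧ (μ {z | R z i0 ≤ r}).toReal ≥ 1 - q} :=
        ⟨0, fun r hr => hr.1⟩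
      have := csInf_le hbdd hmem
      rw [quantileRisk] at hi0
      linarith
    -- the count event
    set X : Fin n → Ω → ℝ := fun i ω => if R (Z i ω) i0 < α then (1:ℝ) else 0 with hXdef
    set B : Set Ω := {ω | (k:ℝ) ≤ ∑ i : Fin n, X i ω} with hBdef
    have hDmeas : MeasurableSet {z | R z i0 < α} :=
      measurableSet_lt (hRmeas i0) measurable_const
    have hXmeas : ∀ i, Measurable (X i) := fun i =>
      (Measurable.ite hDmeas measurable_const measurable_const).comp (hmeas i)
    have hBmeas : MeasurableSet B := by
      rw [hBdef]
      exact measurableSet_le measurable_const (Finset.measurable_sum _ fun i _ => hXmeas i)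
    -- event rewrite
    have hev : ∀ ω, Rhatq i0 ω < α ↔ ω ∈ B := by
      intro ω
      rw [hRhatq]
      have hlen : (List.ofFn fun i => R (Z i ω) i0).length = n := by simp
      rw [show (fun lam ω => kthSmallest (List.ofFn fun i => R (Z i ω) lam) k) i0 ω
        = kthSmallest (List.ofFn fun i => R (Z i ω) i0) k from rfl]
      rw [kthSmallest_lt_iff _ k α hk1 (by rw [hlen]; exact hkn)]
      rw [countP_ofFn]
      rw [hBdef]
      simp only [Set.mem_setOf_eq, hXdef]
      constructor
      · intro h
        calc (k:ℝ) ≤ ((∑ i : Fin n, if decide (R (Z i ω) i0 < α) then 1 else 0 : ℕ) : ℝ) := by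
              exact_mod_cast h
          _ = ∑ i : Fin n, (if R (Z i ω) i0 < α then (1:ℝ) else 0) := by
              push_cast
              exact Finset.sum_congr rfl (fun i _ => by by_cases h' : R (Z i ω) i0 < α <;> simp [h'])
      · intro h
        have : ((∑ i : Fin n, if decide (R (Z i ω) i0 < α) then 1 else 0 : ℕ) : ℝ)
            = ∑ i : Fin n, (if R (Z i ω) i0 < α then (1:ℝ) else 0) := by
          push_cast
          exact Finset.sum_congr rfl (fun i _ => by by_cases h' : R (Z i ω) i0 < α <;> simp [h'])
        rw [← this] at h
        exact_mod_cast h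
    -- inclusion
    have hsub : Bᶜ ⊆ {ω | ∀ lam ∈ Λhat ω, quantileRisk μ R lam q ≤ α} := by
      intro ω hω lam hlam
      by_contra hcon
      push_neg at hcon
      have hle : i0 ≤ lam := hmin lam hcon
      have : Rhatq i0 ω < α := by
        rw [hΛhat] at hlam
        exact hlam i0 hle
      exact hω ((hev ω).mp this)
    -- quantitative bound
    have hquant : (P B).toReal ≤ δ := by
      have hn1 : (1:ℝ) ≤ (n:ℝ) := by exact_mod_cast hn
      set V : ℝ := n * q * (1 - q) with hVdef
      set b : ℝ := n * rn with hbdef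
      set b0 : ℝ := -Real.log δ with hb0def
      set d : ℝ := (k:ℝ) - n * (1 - q) with hddef
      have hb0pos : 0 < b0 := by
        have := Real.log_neg hδ.1 hδ.2; rw [hb0def]; linarith
      have hbval : b = 1.4 * Real.log (Real.log (2.1 * n)) + Real.log (10 / δ) := by
        rw [hbdef, hrn, hε]
        field_simp
      have hlog10 : Real.log (10 / δ) = Real.log 10 + b0 := by
        rw [Real.log_div (by norm_num) (ne_of_gt hδ.1), hb0def]; ring
      have hl2 : (0.6931471803:ℝ) < Real.log 2 := Real.log_two_gt_d9
      have hlogn : Real.log 2 ≤ Real.log (2.1 * n) :=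
        Real.log_le_log (by norm_num) (by nlinarith)
      have hLlow : (0.693:ℝ) ≤ Real.log (2.1 * n) := by linarith
      have hLL : (1:ℝ) - (Real.log (2.1*n))⁻¹ ≤ Real.log (Real.log (2.1 * n)) := by
        have hx : (0:ℝ) < Real.log (2.1*n) := by linarith
        have := Real.log_le_sub_one_of_pos (inv_pos.mpr hx)
        rw [Real.log_inv] at this
        linarith
      have hinv : (Real.log (2.1*n))⁻¹ ≤ 1/0.693 := by
        rw [inv_le_comm₀ (by linarith) (by norm_num)]
        calc (1/0.693 : ℝ)⁻¹ = 0.693 := by norm_num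
          _ ≤ Real.log (2.1*n) := hLlow
      have hLL2 : (-0.4431:ℝ) ≤ Real.log (Real.log (2.1 * n)) := by
        have h1 : (1:ℝ) - 1/0.693 ≤ 1 - (Real.log (2.1*n))⁻¹ := by linarith
        have h2 : (-0.4431:ℝ) ≤ 1 - 1/0.693 := by norm_num
        linarith
      have hlog10ge : (2.0794:ℝ) ≤ Real.log 10 := by
        have h8 : Real.log 8 ≤ Real.log 10 := Real.log_le_log (by norm_num) (by norm_num)
        have : Real.log 8 = 3 * Real.log 2 := by
          rw [show (8:ℝ) = 2^3 by norm_num, Real.log_pow]; push_cast; ring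
        linarith
      have hblow : b0 + 1.45 ≤ b := by
        rw [hbval, hlog10]
        nlinarith
      -- floor bound
      have hfl : (n:ℝ) * (1 - qstar) < (k:ℝ) + 1 := by
        rw [hk]; push_cast; exact Nat.lt_floor_add_one _
      have hsqrt : (n:ℝ) * Real.sqrt (q * (1 - q) * rn) = Real.sqrt (V * b) := by
        have h1 : V * b = (n:ℝ)^2 * (q * (1 - q) * rn) := by rw [hVdef, hbdef]; ring
        rw [h1, Real.sqrt_mul (sq_nonneg _), Real.sqrt_sq (by positivity : (0:ℝ) ≤ (n:ℝ))]
      have hqexp : (n:ℝ) * (1 - qstar)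
          = n * (1 - q) + 1.5 * ((n:ℝ) * Real.sqrt (q * (1 - q) * rn)) + 0.8 * b := by
        rw [hqstar, hbdef]; ring
      have hdlow : 1.5 * Real.sqrt (V * b) + 0.8 * b - 1 ≤ d := by
        rw [hddef]
        rw [hqexp, hsqrt] at hfl
        linarith
      have hVnn : (0:ℝ) ≤ V := by
        rw [hVdef]
        exact mul_nonneg (mul_nonneg (by positivity) hq.1.le) (by linarith [hq.2])
      obtain ⟨hdpos, hkey⟩ := key_arith V b b0 d hVnn hb0pos hblow hdlow
      have hVpos : 0 < V := by
        rw [hVdef]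
        have h3 : (0:ℝ) < (n:ℝ) := by exact_mod_cast hn
        exact mul_pos (mul_pos h3 hq.1) (by linarith [hq.2])
      obtain ⟨t, ht, hexp⟩ := exponent_bound V d b0 hVpos hdpos hb0pos.le hkey
      -- measure bound of {<α} set
      have hple : (μ {z | R z i0 < α}).toReal ≤ 1 - q := by
        have hmono : μ {z | R z i0 < α} ≤ μ {z | R z i0 ≤ α} :=
          measure_mono (fun z hz => by
            simp only [Set.mem_setOf_eq] at hz ⊢; linarith)
        have := ENNReal.toReal_mono (measure_ne_top μ _) hmono
        linarith [hqf]
      have hq0 : (0:ℝ) ≤ 1 - q := by linarith [hq.2]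
      have hq1 : (1:ℝ) - q ≤ 1 := by linarith [hq.1]
      have hsb := single_bound P n Z hmeas hindep μ hident (fun z => R z i0) (hRmeas i0)
        α (1 - q) hq0 hq1 hple k t ht
      have hBeq : B = {ω | (k:ℝ) ≤ ∑ i : Fin n, (if R (Z i ω) i0 < α then (1:ℝ) else 0)} := by
        rw [hBdef, hXdef]
      rw [hBeq]
      refine hsb.trans ?_
      have hexpo : -t * k + n * ((1-q) * t + (1-q) * (1 - (1-q)) * (Real.exp t - 1 - t))
          ≤ Real.log δ := by
        have h1 : -t * k + n * ((1-q) * t + (1-q) * (1 - (1-q)) * (Real.exp t - 1 - t))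
            = V * (Real.exp t - 1 - t) - t * d := by
          rw [hVdef, hddef]; ring
        rw [h1]
        rw [hb0def] at hexp
        linarith
      calc Real.exp (-t * k + n * ((1-q) * t + (1-q) * (1 - (1-q)) * (Real.exp t - 1 - t)))
          ≤ Real.exp (Real.log δ) := Real.exp_le_exp.mpr hexpo
        _ = δ := Real.exp_log hδ.1
    -- conclude
    have hPB : P B ≤ ENNReal.ofReal δ := by
      rw [← ENNReal.ofReal_toReal (measure_ne_top P B)]
      exact ENNReal.ofReal_le_ofReal hquant
    calc ENNReal.ofReal (1 - δ) = 1 - ENNReal.ofReal δ := by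
          rw [← ENNReal.ofReal_one, ← ENNReal.ofReal_sub _ hδ.1.le]
      _ ≤ 1 - P B := tsub_le_tsub_left hPB 1
      _ = P Bᶜ := (prob_compl_eq_one_sub hBmeas).symm
      _ ≤ P {ω | ∀ lam ∈ Λhat ω, quantileRisk μ R lam q ≤ α} := measure_mono hsub
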